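/- Let G be an ergodic anti-balanced signed digraph with partition S, S̄, signed transition matrix P, and stationary distribution π of the unsigned chain. Then lim_{t→∞} P^{2t} = 1̂_S π̂_S^T and lim_{t→∞} P^{2t+1} = -1̂_S π̂_S^T. -/

import Mathlib

open Matrix Filter Topology Finset

/-- A directed walk of given length in a digraph with edge relation `E`. -/
def DiWalk {V : Type*} (E : V → V → Prop) : ℕ → V → V → Prop
  | 0, i, j => i = j
  | n + 1, i, j => ∃ k, E i k ∧ DiWalk E n k j

/-- Strong connectivity: every node reaches every other node by some walk. -/
def DiStronglyConnected {V : Type*} (E : V → V → Prop) : Prop :=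
  ∀ i j : V, ∃ n : ℕ, DiWalk E n i j

/-- Aperiodicity: the gcd of the lengths of all (positive-length) closed walks is 1. -/
def DiAperiodic {V : Type*} (E : V → V → Prop) : Prop :=
  ∀ d : ℕ, (∀ n : ℕ, 0 < n → (∃ i, DiWalk E n i i) → d ∣ n) → d = 1

/-- A signed directed walk of given length and total sign `s` (product of edge signs). -/
def SWalk {V : Type*} (E : V → V → Prop) (σ : V → V → ℤ) : ℕ → ℤ → V → V → Prop
  | 0, s, i, j => i = j ∧ s = 1
  | n + 1, s, i, j => ∃ k s', E i k ∧ SWalk E σ n s' k j ∧ s = σ i k * s'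

/-- Balanced signed digraph: a bipartition with positive edges inside parts,
negative edges across. -/
def SBalancedG {V : Type*} (E : V → V → Prop) (σ : V → V → ℤ) : Prop :=
  ∃ S : Set V, ∀ i j, E i j → (σ i j = 1 ↔ (i ∈ S ↔ j ∈ S))

/-- Anti-balanced signed digraph: negative edges inside parts, positive edges across. -/
def SAntiBalancedG {V : Type*} (E : V → V → Prop) (σ : V → V → ℤ) : Prop :=
  ∃ S : Set V, ∀ i j, E i j → (σ i j = -1 ↔ (i ∈ S ↔ j ∈ S))

/-- Weighted out-degree `d_i = Σ_j |A_{ij}|` of a signed weighted digraph. -/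
noncomputable def sdeg {V : Type*} [Fintype V] (A : Matrix V V ℝ) (i : V) : ℝ :=
  ∑ j, |A i j|

/-- The signed transition matrix `P = D⁻¹A`. -/
noncomputable def signedP {V : Type*} [Fintype V] (A : Matrix V V ℝ) : Matrix V V ℝ :=
  Matrix.of fun i j => A i j / sdeg A i

/-- The unsigned transition matrix `P̄ = D⁻¹|A|`. -/
noncomputable def unsignedP {V : Type*} [Fintype V] (A : Matrix V V ℝ) : Matrix V V ℝ :=
  Matrix.of fun i j => |A i j| / sdeg A i

/-- The vector `g⁻ = D⁻¹A⁻1` of weighted fractions of outgoing negative edges. -/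
noncomputable def gneg {V : Type*} [Fintype V] (A : Matrix V V ℝ) (i : V) : ℝ :=
  (∑ j, max (-(A i j)) 0) / sdeg A i

/-- Ergodicity of the underlying (unsigned) digraph of a weighted signed digraph. -/
def SErgodic {V : Type*} (A : Matrix V V ℝ) : Prop :=
  DiStronglyConnected (fun i j => A i j ≠ 0) ∧ DiAperiodic (fun i j => A i j ≠ 0)

/-- Balanced weighted signed digraph. -/
def SBalancedM {V : Type*} (A : Matrix V V ℝ) : Prop :=
  ∃ S : Set V, ∀ i j, A i j ≠ 0 → (0 < A i j ↔ (i ∈ S ↔ j ∈ S))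

/-- Anti-balanced weighted signed digraph. -/
def SAntiBalancedM {V : Type*} (A : Matrix V V ℝ) : Prop :=
  ∃ S : Set V, ∀ i j, A i j ≠ 0 → (A i j < 0 ↔ (i ∈ S ↔ j ∈ S))

/-- `π` is a stationary distribution of the unsigned chain `P̄ = D⁻¹|A|`. -/
def SStationary {V : Type*} [Fintype V] (A : Matrix V V ℝ) (π : V → ℝ) : Prop :=
  (∀ i, 0 ≤ π i) ∧ (∑ i, π i = 1) ∧ ∀ j, ∑ i, π i * unsignedP A i j = π j

/-!
Anti-balance says exactly that `P = -Î P̄ Î` with `Î = diag 1̂_S`, and `Î² = 1`, so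
`P^t = (-1)^t Î P̄^t Î`; everything then reduces to the convergence `P̄^t → 1 πᵀ` of the unsigned
chain. Ergodicity makes some power `P̄^m` entrywise positive, say `≥ ε`. Since the rows of
`P̄^t - 1 πᵀ` sum to zero, subtracting the constant matrix `ε J` from `P̄^m` does not change
`(P̄^t - 1 πᵀ) P̄^m = P̄^(t+m) - 1 πᵀ`, and in the max-row-sum norm `‖P̄^m - ε J‖ = 1 - |V| ε < 1`.
-/

section Walks

variable {V : Type*} {E : V → V → Prop}

theorem DiWalk.append {n m : ℕ} {i j k : V} (h₁ : DiWalk E n i j) (h₂ : DiWalk E m j k) :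
    DiWalk E (n + m) i k := by
  induction n generalizing i with
  | zero =>
    obtain rfl : i = j := h₁
    simpa using h₂
  | succ n ih =>
    obtain ⟨l, hl, hw⟩ := h₁
    rw [Nat.add_right_comm]
    exact ⟨l, hl, ih hw⟩

theorem DiWalk.exists_edge {n : ℕ} {i j : V} (h : DiWalk E (n + 1) i j) : ∃ k, E i k :=
  let ⟨k, hk, _⟩ := h
  ⟨k, hk⟩

variable (E) in
def closedWalkLengths (v : V) : AddSubmonoid ℕ where
  carrier := {n | DiWalk E n v v}
  add_mem' := DiWalk.append
  zero_mem' := rfl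

theorem DiAperiodic.setGcd_closedWalkLengths (hsc : DiStronglyConnected E)
    (hap : DiAperiodic E) (v : V) : Nat.setGcd (closedWalkLengths E v) = 1 := by
  refine hap _ fun n _ ⟨i, hi⟩ => ?_
  obtain ⟨a, hvi⟩ := hsc v i
  obtain ⟨b, hiv⟩ := hsc i v
  have hab : Nat.setGcd (closedWalkLengths E v) ∣ a + b :=
    Nat.setGcd_dvd_of_mem (hvi.append hiv)
  have hanb : Nat.setGcd (closedWalkLengths E v) ∣ n + (a + b) := by
    apply Nat.setGcd_dvd_of_mem
    rw [add_left_comm]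
    exact hvi.append (hi.append hiv)
  exact (Nat.dvd_add_left hab).mp hanb

theorem DiStronglyConnected.eventually_forall_diWalk [Fintype V] (hsc : DiStronglyConnected E)
    (hap : DiAperiodic E) : ∀ᶠ n in atTop, ∀ i j, DiWalk E n i j := by
  cases isEmpty_or_nonempty V with
  | inl _ => exact Eventually.of_forall fun _ i => isEmptyElim i
  | inr hV =>
  obtain ⟨v⟩ := hV
  obtain ⟨N, hN⟩ := Nat.exists_mem_closure_of_ge (closedWalkLengths E v)
  choose a ha using fun i => hsc i v
  choose b hb using fun j => hsc v j
  refine eventually_atTop.2 ⟨N + ∑ i, a i + ∑ j, b j, fun n hn i j => ?_⟩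
  have hai : a i ≤ ∑ i, a i := single_le_sum (fun _ _ => Nat.zero_le _) (mem_univ i)
  have hbj : b j ≤ ∑ j, b j := single_le_sum (fun _ _ => Nat.zero_le _) (mem_univ j)
  have hloop : DiWalk E (n - a i - b j) v v := by
    have h := hN (n - a i - b j) (by omega)
      (by rw [hap.setGcd_closedWalkLengths hsc]; exact one_dvd _)
    rwa [AddSubmonoid.closure_eq] at h
  have h := (ha i).append (hloop.append (hb j))
  rwa [show a i + (n - a i - b j + b j) = n by omega] at h

end Walks

theorem Matrix.pow_apply_pos_of_diWalk {V R : Type*} [Fintype V] [DecidableEq V] [Semiring R]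
    [PartialOrder R] [IsStrictOrderedRing R] {Q : Matrix V V R} {E : V → V → Prop}
    (hQ : ∀ i j, 0 ≤ Q i j) (hE : ∀ i j, E i j → 0 < Q i j) {n : ℕ} {i j : V}
    (h : DiWalk E n i j) : 0 < (Q ^ n) i j := by
  induction n generalizing i with
  | zero =>
    obtain rfl : i = j := h
    simp
  | succ n ih =>
    obtain ⟨k, hk, hw⟩ := h
    rw [pow_succ', mul_apply]
    exact sum_pos' (fun l _ => mul_nonneg (hQ i l) (pow_apply_nonneg hQ n l j))
      ⟨k, mem_univ k, mul_pos (hE i k hk) (ih hw)⟩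

section TransitionMatrices

variable {V : Type*} [Fintype V] {A : Matrix V V ℝ}

theorem sdeg_pos {i k : V} (h : A i k ≠ 0) : 0 < sdeg A i :=
  sum_pos' (fun _ _ => abs_nonneg _) ⟨k, mem_univ k, abs_pos.2 h⟩

theorem unsignedP_nonneg (i j : V) : 0 ≤ unsignedP A i j :=
  div_nonneg (abs_nonneg _) (sum_nonneg fun _ _ => abs_nonneg _)

theorem unsignedP_pos {i j : V} (h : A i j ≠ 0) : 0 < unsignedP A i j :=
  div_pos (abs_pos.2 h) (sdeg_pos h)

theorem unsignedP_mem_rowStochastic [DecidableEq V] (hA : ∀ i, sdeg A i ≠ 0) :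
    unsignedP A ∈ rowStochastic ℝ V := by
  refine mem_rowStochastic_iff_sum.2 ⟨unsignedP_nonneg, fun i => ?_⟩
  simp only [unsignedP, of_apply, ← sum_div]
  exact div_self (hA i)

theorem SErgodic.sdeg_pos (herg : SErgodic A) (i : V) : 0 < sdeg A i := by
  obtain ⟨n, hwalk, hn⟩ :=
    ((herg.1.eventually_forall_diWalk herg.2).and (eventually_gt_atTop 0)).exists
  obtain ⟨n, rfl⟩ := Nat.exists_eq_add_one_of_ne_zero hn.ne'
  obtain ⟨k, hk⟩ := (hwalk i i).exists_edge
  exact _root_.sdeg_pos hk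

theorem SErgodic.isPrimitive_unsignedP [DecidableEq V] (herg : SErgodic A) :
    (unsignedP A).IsPrimitive := by
  obtain ⟨n, hn, hpos⟩ :=
    ((herg.1.eventually_forall_diWalk herg.2).and (eventually_gt_atTop 0)).exists
  exact ⟨unsignedP_nonneg, n, hpos, fun i j =>
    pow_apply_pos_of_diWalk unsignedP_nonneg (fun _ _ => unsignedP_pos) (hn i j)⟩

end TransitionMatrices

namespace Matrix

variable {n : Type*} [Fintype n] [DecidableEq n]

theorem pow_sub_vecMulVec_eq {R : Type*} [Ring R] {Q : Matrix n n R} (hQ : Q *ᵥ 1 = 1)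
    {π : n → R} (hπ1 : π ⬝ᵥ 1 = 1) (hπ : π ᵥ* Q = π) (ν : n → R) (r m k : ℕ) :
    Q ^ (r + m * k) - vecMulVec 1 π =
      (1 - vecMulVec 1 π) * Q ^ r * (Q ^ m - vecMulVec 1 ν) ^ k := by
  have hstat : ∀ s, (vecMulVec 1 π : Matrix n n R) * Q ^ s = vecMulVec 1 π := by
    intro s
    induction s with
    | zero => rw [pow_zero, mul_one]
    | succ s ih => rw [pow_succ, ← mul_assoc, ih, vecMulVec_mul, hπ]
  have hQJ : ∀ s, Q ^ s * vecMulVec 1 ν = (vecMulVec 1 ν : Matrix n n R) := by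
    intro s
    induction s with
    | zero => rw [pow_zero, one_mul]
    | succ s ih => rw [pow_succ, mul_assoc, mul_vecMulVec, hQ, ih]
  have hY : ∀ s, Q ^ s - vecMulVec 1 π = (1 - vecMulVec 1 π) * Q ^ s := fun s => by
    rw [sub_mul, one_mul, hstat]
  have hYJ : ∀ s, (1 - vecMulVec 1 π : Matrix n n R) * Q ^ s * vecMulVec 1 ν = 0 := fun s => by
    rw [mul_assoc, hQJ, sub_mul, one_mul, vecMulVec_mul_vecMulVec, hπ1, one_smul, sub_self]
  induction k with
  | zero => rw [mul_zero, add_zero, pow_zero, mul_one, hY]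
  | succ k ih =>
    rw [pow_succ, ← mul_assoc, ← ih, hY (r + m * k), mul_sub, hYJ, sub_zero, mul_assoc, ← pow_add,
      ← hY, mul_add_one, ← add_assoc]

section LinftyOpNorm

attribute [local instance] Matrix.linftyOpSeminormedAddCommGroup
  Matrix.linftyOpNormedAddCommGroup Matrix.linftyOpNormedRing

omit [DecidableEq n] in
theorem linfty_opNorm_le_of_sum_norm_le {m α : Type*} [Fintype m] [SeminormedAddCommGroup α]
    {A : Matrix m n α} {r : ℝ} (hr : 0 ≤ r) (h : ∀ i, ∑ j, ‖A i j‖ ≤ r) : ‖A‖ ≤ r := by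
  rw [linfty_opNorm_def, ← NNReal.coe_mk r hr, NNReal.coe_le_coe, Finset.sup_le_iff]
  intro i _
  rw [← NNReal.coe_le_coe, NNReal.coe_sum]
  exact h i

theorem linfty_opNorm_le_one_of_mem_rowStochastic {Q : Matrix n n ℝ}
    (hQ : Q ∈ rowStochastic ℝ n) : ‖Q‖ ≤ 1 :=
  linfty_opNorm_le_of_sum_norm_le zero_le_one fun i => by
    simp only [Real.norm_of_nonneg (nonneg_of_mem_rowStochastic hQ),
      sum_row_of_mem_rowStochastic hQ i, le_refl]

theorem linfty_opNorm_sub_vecMulVec_le [Nonempty n] {Q : Matrix n n ℝ}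
    (hQ : Q ∈ rowStochastic ℝ n) {ε : ℝ} (hε : ∀ i j, ε ≤ Q i j) :
    ‖Q - vecMulVec 1 (fun _ => ε)‖ ≤ 1 - Fintype.card n * ε := by
  have hrow : ∀ i,
      ∑ j, ‖(Q - vecMulVec 1 fun _ => ε : Matrix n n ℝ) i j‖ = 1 - Fintype.card n * ε := by
    intro i
    simp only [sub_apply, vecMulVec_apply, Pi.one_apply, one_mul,
      fun j => Real.norm_of_nonneg (sub_nonneg.2 (hε i j)), sum_sub_distrib,
      sum_row_of_mem_rowStochastic hQ i, sum_const, card_univ, nsmul_eq_mul]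
  obtain ⟨i⟩ := ‹Nonempty n›
  exact linfty_opNorm_le_of_sum_norm_le ((hrow i).symm ▸ sum_nonneg fun _ _ => norm_nonneg _)
    fun i => (hrow i).le

theorem IsPrimitive.tendsto_pow_of_mem_rowStochastic {Q : Matrix n n ℝ} (hprim : Q.IsPrimitive)
    (hQ : Q ∈ rowStochastic ℝ n) {π : n → ℝ} (hπ1 : ∑ i, π i = 1) (hπ : π ᵥ* Q = π) :
    Tendsto (fun t => Q ^ t) atTop (𝓝 (vecMulVec 1 π)) := by
  obtain ⟨m, hm, hpos⟩ := hprim.exists_pos_pow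
  have : Nonempty n := by
    by_contra h
    simp [not_nonempty_iff.1 h] at hπ1
  obtain ⟨p, -, hp⟩ := exists_min_image univ (fun p : n × n => (Q ^ m) p.1 p.2) univ_nonempty
  set ε := (Q ^ m) p.1 p.2
  set c := 1 - Fintype.card n * ε
  have hB : ‖Q ^ m - vecMulVec 1 (fun _ => ε)‖ ≤ c :=
    linfty_opNorm_sub_vecMulVec_le (pow_mem hQ m) fun i j => hp (i, j) (mem_univ _)
  have hc0 : 0 ≤ c := (norm_nonneg _).trans hB
  have hc1 : c < 1 :=
    sub_lt_self _ (mul_pos (Nat.cast_pos.2 Fintype.card_pos) (hpos p.1 p.2))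
  have hbound : ∀ t, ‖Q ^ t - vecMulVec 1 π‖ ≤ ‖1 - vecMulVec 1 π‖ * c ^ (t / m) := fun t => by
    have h := pow_sub_vecMulVec_eq hQ.2 (by rwa [dotProduct_one]) hπ (fun _ => ε)
      (t % m) m (t / m)
    rw [Nat.mod_add_div] at h
    rw [h]
    calc _ ≤ ‖1 - vecMulVec 1 π‖ * ‖Q ^ (t % m)‖ * ‖(Q ^ m - vecMulVec 1 fun _ => ε) ^ (t / m)‖ :=
          norm_mul₃_le
      _ ≤ ‖1 - vecMulVec 1 π‖ * 1 * c ^ (t / m) := by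
          have hQt := linfty_opNorm_le_one_of_mem_rowStochastic (pow_mem hQ (t % m))
          have hBt := (norm_pow_le _ (t / m)).trans (pow_le_pow_left₀ (norm_nonneg _) hB (t / m))
          gcongr
          exact mul_nonneg (norm_nonneg _) zero_le_one
      _ = _ := by rw [mul_one]
  refine tendsto_iff_norm_sub_tendsto_zero.2 (squeeze_zero (fun _ => norm_nonneg _) hbound ?_)
  simpa using ((tendsto_pow_atTop_nhds_zero_of_lt_one hc0 hc1).comp
    (Nat.tendsto_div_const_atTop hm.ne')).const_mul ‖1 - vecMulVec 1 π‖

end LinftyOpNorm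

end Matrix

theorem SErgodic.tendsto_unsignedP_pow {V : Type*} [Fintype V] [DecidableEq V]
    {A : Matrix V V ℝ} (herg : SErgodic A) {π : V → ℝ} (hπ : SStationary A π) :
    Tendsto (fun t => unsignedP A ^ t) atTop (𝓝 (vecMulVec 1 π)) :=
  herg.isPrimitive_unsignedP.tendsto_pow_of_mem_rowStochastic
    (unsignedP_mem_rowStochastic fun i => (herg.sdeg_pos i).ne') hπ.2.1 (funext hπ.2.2)

section SignIndicator

variable {V : Type*} [DecidableEq V]

/-- The vector `1̂_S`. -/
def signIndicator (S : Finset V) (i : V) : ℝ :=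
  if i ∈ S then 1 else -1

theorem signIndicator_mul_signIndicator (S : Finset V) (i j : V) :
    signIndicator S i * signIndicator S j = if (i ∈ S ↔ j ∈ S) then 1 else -1 := by
  unfold signIndicator
  by_cases hi : i ∈ S <;> by_cases hj : j ∈ S <;> simp [hi, hj]

theorem diagonal_signIndicator_mul_self [Fintype V] (S : Finset V) :
    diagonal (signIndicator S) * diagonal (signIndicator S) = 1 := by
  rw [diagonal_mul_diagonal, ← diagonal_one]
  congr 1
  funext i
  simpa using signIndicator_mul_signIndicator S i i

theorem apply_eq_neg_signIndicator_mul_abs {A : Matrix V V ℝ} {S : Finset V}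
    (hanti : ∀ i j, A i j ≠ 0 → (A i j < 0 ↔ (i ∈ S ↔ j ∈ S))) (i j : V) :
    A i j = -(signIndicator S i * signIndicator S j) * |A i j| := by
  by_cases h : A i j = 0
  · simp [h]
  rw [signIndicator_mul_signIndicator]
  rcases lt_or_gt_of_ne h with hneg | hpos
  · rw [abs_of_neg hneg, if_pos ((hanti i j h).1 hneg)]
    ring
  · rw [abs_of_pos hpos, if_neg fun hS => hpos.not_gt ((hanti i j h).2 hS)]
    ring

theorem signedP_eq_neg_diagonal_mul_unsignedP_mul_diagonal [Fintype V] {A : Matrix V V ℝ}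
    {S : Finset V} (hanti : ∀ i j, A i j ≠ 0 → (A i j < 0 ↔ (i ∈ S ↔ j ∈ S))) :
    signedP A = -(diagonal (signIndicator S) * unsignedP A * diagonal (signIndicator S)) := by
  ext i j
  simp only [signedP, unsignedP, Matrix.neg_apply, mul_diagonal, diagonal_mul, of_apply]
  nth_rw 1 [apply_eq_neg_signIndicator_mul_abs hanti i j]
  ring

end SignIndicator

theorem tendsto_neg_conj_pow_even_odd {R : Type*} [Ring R] [TopologicalSpace R]
    [IsTopologicalRing R] {D M L : R} (hD : D * D = 1)
    (h : Tendsto (fun t => M ^ t) atTop (𝓝 L)) :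
    Tendsto (fun t => (-(D * M * D)) ^ (2 * t)) atTop (𝓝 (D * L * D)) ∧
      Tendsto (fun t => (-(D * M * D)) ^ (2 * t + 1)) atTop (𝓝 (-(D * L * D))) := by
  have hconj : ∀ t, (D * M * D) ^ t = D * M ^ t * D := Units.conj_pow ⟨D, D, hD, hD⟩ M
  have hlim : ∀ {f : ℕ → ℕ}, Tendsto f atTop atTop →
      Tendsto (fun t => D * M ^ f t * D) atTop (𝓝 (D * L * D)) := fun hf =>
    ((h.comp hf).const_mul D).mul_const D
  have h2 : Tendsto (fun t : ℕ => 2 * t) atTop atTop := tendsto_id.const_mul_atTop' two_pos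
  constructor
  · simpa only [(even_two_mul _).neg_pow, hconj] using hlim h2
  · simpa only [(odd_two_mul_add_one _).neg_pow, hconj] using
      (hlim (f := fun t => 2 * t + 1) (tendsto_atTop_mono (fun _ => Nat.le_succ _) h2)).neg

/-- For an anti-balanced ergodic signed digraph with partition S, S̄,
`P^{2t} → 1̂_S π̂_S^T` and `P^{2t+1} → -1̂_S π̂_S^T`. -/
theorem antibalanced_ergodic_powers_limit {V : Type*} [Fintype V] [DecidableEq V]
    (A : Matrix V V ℝ) (S : Finset V)
    (herg : SErgodic A)
    (hanti : ∀ i j, A i j ≠ 0 → (A i j < 0 ↔ (i ∈ S ↔ j ∈ S)))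
    (π : V → ℝ) (hπ : SStationary A π) :
    Tendsto (fun t => signedP A ^ (2 * t)) atTop
      (nhds (Matrix.of fun i j =>
        (if i ∈ S then (1 : ℝ) else -1) * (if j ∈ S then π j else -π j))) ∧
    Tendsto (fun t => signedP A ^ (2 * t + 1)) atTop
      (nhds (-(Matrix.of fun i j =>
        (if i ∈ S then (1 : ℝ) else -1) * (if j ∈ S then π j else -π j)))) := by
  have hlimit : (Matrix.of fun i j =>
      (if i ∈ S then (1 : ℝ) else -1) * (if j ∈ S then π j else -π j)) =
      diagonal (signIndicator S) * vecMulVec 1 π * diagonal (signIndicator S) := by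
    ext i j
    simp only [of_apply, mul_diagonal, diagonal_mul, vecMulVec_apply, Pi.one_apply, one_mul,
      signIndicator]
    split_ifs <;> ring
  rw [hlimit, signedP_eq_neg_diagonal_mul_unsignedP_mul_diagonal hanti]
  exact tendsto_neg_conj_pow_even_odd (diagonal_signIndicator_mul_self S)
    (herg.tendsto_unsignedP_pow hπ)
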